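/- If in a permutative groupoid G every object has an inverse up to isomorphism, then the functor (g₁, g₂) ↦ (g₂, g₂⁻¹ ⊗ g₁) is a quasi-inverse to the shear functor (g, h) ↦ (g ⊗ h, g), where g₂⁻¹ denotes a chosen inverse of g₂. -/

import Mathlib

open CategoryTheory

universe v u

/-- A permutative (strict symmetric monoidal) structure on a category `C`:
a tensor product bifunctor which is strictly associative and strictly unital,
together with a symmetry natural isomorphism satisfying the symmetry and
hexagon axioms. -/
structure PermutativeStruct (C : Type u) [Category.{v} C] where
  /-- the tensor product bifunctor -/
  T : C × C ⥤ C
  /-- the unit object -/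
  e : C
  /-- strict associativity on objects -/
  assoc : ∀ X Y Z : C, T.obj (T.obj (X, Y), Z) = T.obj (X, T.obj (Y, Z))
  /-- strict associativity as an equality of functors -/
  assoc_functor :
    Functor.prod T (𝟭 C) ⋙ T = prod.associator C C C ⋙ Functor.prod (𝟭 C) T ⋙ T
  /-- strict left unitality -/
  unitl : Prod.sectR e C ⋙ T = 𝟭 C
  /-- strict right unitality -/
  unitr : Prod.sectL C e ⋙ T = 𝟭 C
  /-- the symmetry natural isomorphism -/
  braiding : T ≅ CategoryTheory.Prod.swap C C ⋙ T
  /-- the symmetry is an involution -/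
  symmetry : ∀ X Y : C,
    braiding.hom.app (X, Y) ≫ braiding.hom.app (Y, X) = 𝟙 (T.obj (X, Y))
  /-- the hexagon axiom (in strict form) -/
  hexagon : ∀ X Y Z : C,
    braiding.hom.app (T.obj (X, Y), Z) =
      eqToHom (assoc X Y Z) ≫
        T.map ((𝟙 X, braiding.hom.app (Y, Z)) :
          ((X, T.obj (Y, Z)) : C × C) ⟶ (X, T.obj (Z, Y))) ≫
        eqToHom (assoc X Z Y).symm ≫
        T.map ((braiding.hom.app (X, Z), 𝟙 Y) :
          ((T.obj (X, Z), Y) : C × C) ⟶ (T.obj (Z, X), Y)) ≫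
        eqToHom (assoc Z X Y)

/-- A strict symmetric monoidal functor between permutative categories:
it commutes with the tensor bifunctors on the nose, preserves the unit object,
and is compatible with the symmetries. -/
structure IsStrictSymMonFunctor {C : Type u} [Category.{v} C] {D : Type u} [Category.{v} D]
    (P : PermutativeStruct C) (Q : PermutativeStruct D) (F : C ⥤ D) : Prop where
  tensor : P.T ⋙ F = F.prod F ⋙ Q.T
  unit : F.obj P.e = Q.e
  braid : ∀ X Y : C,
    F.map (P.braiding.hom.app (X, Y)) =
      eqToHom (Functor.congr_obj tensor (X, Y)) ≫
        Q.braiding.hom.app (F.obj X, F.obj Y) ≫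
        eqToHom (Functor.congr_obj tensor (Y, X)).symm

variable {G : Type u} [Groupoid.{v} G]

/-- The shear functor `(g, h) ↦ (g ⊗ h, g)`. -/
def shear (P : PermutativeStruct G) : G × G ⥤ G × G :=
  P.T.prod' (CategoryTheory.Prod.fst G G)

/-!
Left tensoring with `g` is an equivalence of `G`, with quasi-inverse left tensoring with `g⁻¹`
(strict associativity and unitality reduce `g ⊗ (g⁻¹ ⊗ -)` to `(g ⊗ g⁻¹) ⊗ - ≅ 1 ⊗ - = -`).
On morphisms the shear functor is `(a, b) ↦ ((a ⊗ 1) ≫ (1 ⊗ b), a)`, so it is fully faithful,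
and it sends `(g₂, g₂⁻¹ ⊗ g₁)` to `(g₂ ⊗ g₂⁻¹ ⊗ g₁, g₂) ≅ (g₁, g₂)`. A fully faithful functor with
chosen preimages up to isomorphism has a quasi-inverse taking exactly those values on objects.
-/

open scoped CategoryTheory.Prod

theorem CategoryTheory.Functor.FullyFaithful.exists_quasiInverse_obj_eq {C D : Type*}
    [Category C] [Category D] {F : C ⥤ D} (hF : F.FullyFaithful) (o : D → C)
    (e : ∀ x, F.obj (o x) ≅ x) :
    ∃ K : D ⥤ C, (∀ x, K.obj x = o x) ∧
      Nonempty (F ⋙ K ≅ 𝟭 C) ∧ Nonempty (K ⋙ F ≅ 𝟭 D) := by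
  let K : D ⥤ C :=
    { obj := o
      map {x y} f := hF.preimage ((e x).hom ≫ f ≫ (e y).inv)
      map_id _ := hF.map_injective (by simp)
      map_comp _ _ := hF.map_injective (by simp) }
  refine ⟨K, fun _ => rfl, ⟨NatIso.ofComponents (fun X => hF.preimageIso (e (F.obj X))) ?_⟩,
    ⟨NatIso.ofComponents e (by simp [K])⟩⟩
  intro X Y f
  exact hF.map_injective (by simp [K])

namespace PermutativeStruct

section

variable {C : Type u} [Category.{v} C] (P : PermutativeStruct C)

def curriedTensor : C ⥤ C ⥤ C := Functor.curry.obj P.T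

theorem T_map_mkHom_def {X X' Y Y' : C} (f : X ⟶ X') (g : Y ⟶ Y') :
    P.T.map (f ×ₘ g) = P.T.map (f ×ₘ 𝟙 Y) ≫ (P.curriedTensor.obj X').map g := by
  simp [curriedTensor, ← P.T.map_comp]

-- `Prod.sectR a C ⋙ P.T` is definitionally `P.curriedTensor.obj a`.
def curriedTensorCompIso (a b : C) :
    P.curriedTensor.obj b ⋙ P.curriedTensor.obj a ≅ P.curriedTensor.obj (P.T.obj (a, b)) :=
  (Functor.isoWhiskerLeft (Prod.sectR (a, b) C) (eqToIso P.assoc_functor)).symm ≪≫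
    Functor.isoWhiskerRight (NatIso.ofComponents (fun _ => Iso.refl _)
      (fun _ => by dsimp [Prod.sectR]; simp) :
      Prod.sectR (a, b) C ⋙ P.T.prod (𝟭 C) ≅ Prod.sectR (P.T.obj (a, b)) C) P.T

def tensorLeftEquiv {a b : C} (hab : P.T.obj (a, b) ≅ P.e) (hba : P.T.obj (b, a) ≅ P.e) :
    C ≌ C :=
  .mk (P.curriedTensor.obj a) (P.curriedTensor.obj b)
    ((eqToIso P.unitl).symm ≪≫ (P.curriedTensor.mapIso hba).symm ≪≫
      (P.curriedTensorCompIso b a).symm)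
    (P.curriedTensorCompIso a b ≪≫ P.curriedTensor.mapIso hab ≪≫ eqToIso P.unitl)

end

def shearFullyFaithful (P : PermutativeStruct G)
    (h : ∀ a, (P.curriedTensor.obj a).FullyFaithful) : (shear P).FullyFaithful where
  preimage {x y} f := (f.2, (h y.1).preimage (Groupoid.inv (P.T.map (f.2 ×ₘ 𝟙 x.2)) ≫ f.1))
  map_preimage {x y} f := by
    obtain ⟨c, a⟩ := f
    change P.T.obj x ⟶ P.T.obj y at c
    change x.1 ⟶ y.1 at a
    refine Prod.hom_ext ?_ rfl
    change P.T.map (a ×ₘ _) = c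
    rw [P.T_map_mkHom_def a, (h y.1).map_preimage]
    erw [← Category.assoc, Groupoid.comp_inv, Category.id_comp]
  preimage_map {x y} f := by
    obtain ⟨a, b⟩ := f
    refine Prod.hom_ext rfl ?_
    change (h y.1).preimage (Groupoid.inv (P.T.map (a ×ₘ 𝟙 x.2)) ≫ P.T.map (a ×ₘ b)) = b
    rw [P.T_map_mkHom_def a b]
    erw [← Category.assoc, Groupoid.inv_comp, Category.id_comp, (h y.1).preimage_map]

end PermutativeStruct

/-- If every object of a permutative groupoid `G` has an inverse up to
isomorphism, witnessed by a chosen assignment `inv : G → G`, then the functor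
`(g₁, g₂) ↦ (g₂, g₂⁻¹ ⊗ g₁)` is a quasi-inverse of the shear functor
`(g, h) ↦ (g ⊗ h, g)`. -/
theorem shear_quasiInverse (P : PermutativeStruct G) (inv : G → G)
    (hl : ∀ g : G, P.T.obj (g, inv g) ≅ P.e) (hr : ∀ g : G, P.T.obj (inv g, g) ≅ P.e) :
    ∃ K : G × G ⥤ G × G,
      (∀ x : G × G, K.obj x = (x.2, P.T.obj (inv x.2, x.1))) ∧
      Nonempty (shear P ⋙ K ≅ 𝟭 (G × G)) ∧ Nonempty (K ⋙ shear P ≅ 𝟭 (G × G)) := by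
  let E (g : G) : G ≌ G := P.tensorLeftEquiv (hl g) (hr g)
  exact (P.shearFullyFaithful fun g => (E g).fullyFaithfulFunctor).exists_quasiInverse_obj_eq _
    fun x => ((E x.2).counitIso.app x.1).prod (Iso.refl x.2)
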